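/- Let f = θ_{m,0} + Σ_{i=1}^{ℓ} a_i θ_{m,i} ∈ G_{n,m} with a_i ∈ F_2. Then f is an involution of F_2^n (i.e., f ∘ f = id) if and only if a_i = 0 for every i with 1 ≤ i ≤ ⌊ℓ/2⌋. -/

import Mathlib

/-- Index `i + j` computed modulo `n`, for `i : Fin n` and `j : ℕ`. -/
def idx {n : ℕ} (i : Fin n) (j : ℕ) : Fin n :=
  ⟨(i.val + j) % n, Nat.mod_lt _ i.pos⟩

/-- The map `θ_{m,k} : F_2^n → F_2^n`; `θ_{m,0}` is the identity map, and for `k ≥ 1`,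
`(θ_{m,k}(x))_i = x_{i+mk} · ∏_{1 ≤ j ≤ mk−1, m ∤ j} (x_{i+j} + 1)` (indices mod `n`). -/
def theta (n m k : ℕ) : (Fin n → ZMod 2) → Fin n → ZMod 2 :=
  if k = 0 then id
  else fun x i =>
    x (idx i (m * k)) *
      ∏ j ∈ (Finset.Ico 1 (m * k)).filter (fun j => ¬ m ∣ j), (x (idx i j) + 1)

/-- The set `G_{n,m}` of maps `θ_{m,0} + Σ_{k=1}^{⌊n/m⌋} a_k • θ_{m,k}` with `a_k ∈ F_2`. -/
def Gset (n m : ℕ) : Set ((Fin n → ZMod 2) → Fin n → ZMod 2) :=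
  { F | ∃ a : ℕ → ZMod 2,
      F = theta n m 0 + ∑ k ∈ Finset.Icc 1 (n / m), a k • theta n m k }

/-!
Read `x` along the cycle `x_i, x_{i+1}, …`: `θ_{m,k}(x)_i = 1` says that `x_{i+mk} = 1` while the
window of positions `i + j` with `0 < j < mk`, `m ∤ j`, is clear. For `f = id + Σ_r a_r θ_{m,r}`
the core identity is `θ_{m,k} ∘ f = θ_{m,k} + Σ_r a_r θ_{m,k+r}`. It holds because, when
`f(x)_{i+mk} = 1`, the windows of `x` and `f(x)` before `i + mk` are clear together: a discrepancy
`f(x)_p ≠ x_p` at a window position comes from some `θ_{m,r}(x)_p = 1`, that is, from a nonzero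
`x_{p+mr}` at a later window position, or else one beyond `i + mk`, which would force
`f(x)_{i+mk} = 0`. Expanding `f ∘ f` by this identity, the cross terms `a_k a_r θ_{m,k+r}` cancel
in pairs over `F_2`, leaving `f ∘ f = id + Σ_k a_k θ_{m,2k}`. For `2k > ℓ` the map `θ_{m,2k}`
vanishes, since `m ∤ n` puts the coordinate `i + 2km - n = i + 2km` inside its own window; the
remaining `a_k` are read off at coordinate `0` of the image of the unit vector at `2km`.
-/

open Finset

theorem sum_sum_eq_sum_diag_of_symm {ι R : Type*} [DecidableEq ι] [Semiring R] [CharP R 2]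
    (s : Finset ι) (g : ι → ι → R) (hg : ∀ i j, g i j = g j i) :
    ∑ i ∈ s, ∑ j ∈ s, g i j = ∑ i ∈ s, g i i := by
  induction s using Finset.induction_on with
  | empty => simp
  | insert a s ha ih =>
    simp only [sum_insert ha, sum_add_distrib, ih, sum_congr rfl fun i _ => hg i a]
    rw [add_assoc, ← add_assoc (∑ j ∈ s, g a j), CharTwo.add_self_eq_zero, zero_add]

lemma ZMod.add_one_eq_zero_of_ne_zero {v : ZMod 2} (h : v ≠ 0) : v + 1 = 0 := by
  revert v; decide

/-- `θ_{m,k}` on the unrolled sequence `b j = x_{i+j}`, with `N = mk` (see `theta_apply_idx`);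
working on `ℕ` rather than on the cycle lets windows be split and compared by position. -/
def thetaSeq (m N : ℕ) (b : ℕ → ZMod 2) (p : ℕ) : ZMod 2 :=
  b (p + N) * ∏ j ∈ (Ico 1 N).filter (fun j => ¬ m ∣ j), (b (p + j) + 1)

def ClearWindow (m : ℕ) (b : ℕ → ZMod 2) (p N : ℕ) : Prop :=
  ∀ j ∈ Ico 1 N, ¬ m ∣ j → b (p + j) = 0

section ThetaSeq

variable {m M N p : ℕ} {b : ℕ → ZMod 2}

lemma thetaSeq_of_clearWindow (h : ClearWindow m b p N) : thetaSeq m N b p = b (p + N) := by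
  refine mul_right_eq_self₀.2 (Or.inl (prod_eq_one fun j hj => ?_))
  rw [mem_filter] at hj
  rw [h j hj.1 hj.2, zero_add]

lemma thetaSeq_of_not_clearWindow (h : ¬ ClearWindow m b p N) : thetaSeq m N b p = 0 := by
  simp only [ClearWindow, not_forall] at h
  obtain ⟨j, hj, hmj, hb⟩ := h
  exact mul_eq_zero_of_right _ <|
    prod_eq_zero (mem_filter.2 ⟨hj, hmj⟩) (ZMod.add_one_eq_zero_of_ne_zero hb)

lemma thetaSeq_of_eq_zero (h : b (p + N) = 0) : thetaSeq m N b p = 0 := by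
  rw [thetaSeq, h, zero_mul]

lemma thetaSeq_zero : thetaSeq m 0 b p = b p := by
  simp [thetaSeq]

lemma clearWindow_add (hM : m ∣ M) :
    ClearWindow m b p (M + N) ↔ ClearWindow m b p M ∧ ClearWindow m b (p + M) N := by
  refine ⟨fun h => ⟨fun j hj hmj => h j ?_ hmj, fun j hj hmj => ?_⟩,
    fun ⟨h₁, h₂⟩ j hj hmj => ?_⟩
  · simp only [mem_Ico] at hj ⊢; omega
  · simp only [mem_Ico] at hj
    rw [add_assoc]
    exact h (M + j) (by simp only [mem_Ico]; omega) ((Nat.dvd_add_right hM).not.2 hmj)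
  · simp only [mem_Ico] at hj
    rcases lt_trichotomy j M with hjM | rfl | hjM
    · exact h₁ j (mem_Ico.2 ⟨hj.1, hjM⟩) hmj
    · exact absurd hM hmj
    · have := h₂ (j - M) (by simp only [mem_Ico]; omega)
        ((Nat.dvd_add_right hM).not.1 (by rwa [Nat.add_sub_cancel' hjM.le]))
      rwa [add_assoc, Nat.add_sub_cancel' hjM.le] at this

lemma thetaSeq_add_of_clearWindow (hM : m ∣ M) (h : ClearWindow m b p M) :
    thetaSeq m (M + N) b p = thetaSeq m N b (p + M) := by
  by_cases hN : ClearWindow m b (p + M) N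
  · rw [thetaSeq_of_clearWindow ((clearWindow_add hM).2 ⟨h, hN⟩),
      thetaSeq_of_clearWindow hN, add_assoc]
  · rw [thetaSeq_of_not_clearWindow hN,
      thetaSeq_of_not_clearWindow fun h' => hN ((clearWindow_add hM).1 h').2]

lemma thetaSeq_eq_zero_of_blocked {R : ℕ} (hM : m ∣ M) (hN : m ∣ N) (hR : m ∣ R)
    (hp : ¬ m ∣ p) (hpM : p < M) (hMR : M < p + R) (hclear : ClearWindow m b p R)
    (hb : b (p + R) ≠ 0) : thetaSeq m N b M = 0 := by
  rcases lt_trichotomy (M + N) (p + R) with hlt | heq | hgt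
  · refine thetaSeq_of_eq_zero ?_
    have hmj : ¬ m ∣ M + N - p := fun h =>
      hp ((Nat.dvd_add_left h).1 (by rw [Nat.add_sub_cancel' (by omega)]; exact dvd_add hM hN))
    simpa [Nat.add_sub_cancel' (by omega : p ≤ M + N)] using
      hclear (M + N - p) (by simp only [mem_Ico]; omega) hmj
  · exact absurd ((Nat.dvd_add_left hR).1 (heq ▸ dvd_add hM hN)) hp
  · refine thetaSeq_of_not_clearWindow fun h => hb ?_
    have hmj : ¬ m ∣ p + R - M := fun h =>
      hp ((Nat.dvd_add_left hR).1 (by rw [← Nat.add_sub_cancel' hMR.le]; exact dvd_add hM h))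
    simpa [Nat.add_sub_cancel' hMR.le] using h (p + R - M) (by simp only [mem_Ico]; omega) hmj

end ThetaSeq

def thetaSumSeq (m L : ℕ) (a b : ℕ → ZMod 2) (p : ℕ) : ZMod 2 :=
  b p + ∑ r ∈ Icc 1 L, a r * thetaSeq m (m * r) b p

section Composition

variable {m L M p : ℕ} {a b : ℕ → ZMod 2}

lemma exists_clearWindow_of_thetaSumSeq_ne (h : thetaSumSeq m L a b p ≠ b p) :
    ∃ r ∈ Icc 1 L, ClearWindow m b p (m * r) ∧ b (p + m * r) ≠ 0 := by
  rw [thetaSumSeq, Ne, add_eq_left] at h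
  obtain ⟨r, hr, hne⟩ := exists_ne_zero_of_sum_ne_zero h
  have hθ := right_ne_zero_of_mul hne
  by_cases hw : ClearWindow m b p (m * r)
  · exact ⟨r, hr, hw, thetaSeq_of_clearWindow hw ▸ hθ⟩
  · exact absurd (thetaSeq_of_not_clearWindow hw) hθ

lemma thetaSumSeq_eq_zero_of_blocked {R : ℕ}
    (hM : m ∣ M) (hR : m ∣ R) (hp : ¬ m ∣ p) (hpM : p < M) (hMR : M < p + R)
    (hclear : ClearWindow m b p R) (hb : b (p + R) ≠ 0) : thetaSumSeq m L a b M = 0 := by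
  have blocked {N : ℕ} (hN : m ∣ N) : thetaSeq m N b M = 0 :=
    thetaSeq_eq_zero_of_blocked hM hN hR hp hpM hMR hclear hb
  rw [thetaSumSeq, ← thetaSeq_zero (m := m) (b := b) (p := M), blocked (dvd_zero m), zero_add]
  exact sum_eq_zero fun r _ => by rw [blocked (dvd_mul_right m r), mul_zero]

lemma exists_later_of_thetaSumSeq_ne
    (hM : m ∣ M) (hcM : thetaSumSeq m L a b M ≠ 0) (hp : ¬ m ∣ p) (hpM : p < M)
    (h : thetaSumSeq m L a b p ≠ b p) :
    ∃ q, p < q ∧ q < M ∧ ¬ m ∣ q ∧ b q ≠ 0 := by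
  obtain ⟨r, hr, hclear, hb⟩ := exists_clearWindow_of_thetaSumSeq_ne h
  have hm : m ≠ 0 := by rintro rfl; rw [zero_dvd_iff] at hM; omega
  have hmq : ¬ m ∣ p + m * r := (Nat.dvd_add_left (dvd_mul_right m r)).not.2 hp
  refine ⟨p + m * r, ?_, ?_, hmq, hb⟩
  · have := Nat.mul_le_mul (Nat.one_le_iff_ne_zero.2 hm) (mem_Icc.1 hr).1
    omega
  · rcases lt_trichotomy (p + m * r) M with hlt | heq | hgt
    · exact hlt
    · exact absurd (heq ▸ hM) hmq
    · exact absurd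
        (thetaSumSeq_eq_zero_of_blocked hM (dvd_mul_right m r) hp hpM hgt hclear hb) hcM

lemma clearWindow_thetaSumSeq_iff
    (hM : m ∣ M) (hcM : thetaSumSeq m L a b M ≠ 0) :
    ClearWindow m (thetaSumSeq m L a b) 0 M ↔ ClearWindow m b 0 M := by
  simp only [ClearWindow, zero_add, mem_Ico]
  constructor
  · intro hcw
    by_contra! hbw
    obtain ⟨p, hp, hmax⟩ := exists_max_image
      ((Ico 1 M).filter fun j => ¬ m ∣ j ∧ b j ≠ 0) id (by simpa [Finset.Nonempty] using hbw)
    simp only [mem_filter, mem_Ico] at hp hmax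
    obtain ⟨q, hpq, hqM, hmq, hbq⟩ := exists_later_of_thetaSumSeq_ne hM hcM hp.2.1 hp.1.2
      (by rw [hcw p hp.1 hp.2.1]; exact hp.2.2.symm)
    exact absurd (hmax q ⟨⟨by omega, hqM⟩, hmq, hbq⟩) (not_le.2 hpq)
  · intro hbw p hp hmp
    by_contra hcp
    obtain ⟨q, hpq, hqM, hmq, hbq⟩ := exists_later_of_thetaSumSeq_ne hM hcM hmp hp.2
      (by rwa [hbw p hp hmp])
    exact hbq (hbw q ⟨by omega, hqM⟩ hmq)

/-- The sequence form of `θ_{m,k} ∘ f = θ_{m,k} + Σ_r a_r θ_{m,k+r}`. -/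
lemma thetaSeq_thetaSumSeq (hM : m ∣ M) :
    thetaSeq m M (thetaSumSeq m L a b) 0 =
      thetaSeq m M b 0 + ∑ r ∈ Icc 1 L, a r * thetaSeq m (M + m * r) b 0 := by
  by_cases hb : ClearWindow m b 0 M
  · simp only [thetaSeq_add_of_clearWindow hM hb, thetaSeq_of_clearWindow hb, zero_add]
    rw [← thetaSumSeq]
    by_cases hcM : thetaSumSeq m L a b M = 0
    · rw [hcM]; exact thetaSeq_of_eq_zero (by rwa [zero_add])
    · rw [thetaSeq_of_clearWindow ((clearWindow_thetaSumSeq_iff hM hcM).2 hb), zero_add]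
  · have hbN (r : ℕ) : thetaSeq m (M + m * r) b 0 = 0 :=
      thetaSeq_of_not_clearWindow fun h => hb ((clearWindow_add hM).1 h).1
    simp only [hbN, thetaSeq_of_not_clearWindow hb, mul_zero, sum_const_zero, add_zero]
    by_cases hcM : thetaSumSeq m L a b M = 0
    · exact thetaSeq_of_eq_zero (by rwa [zero_add])
    · exact thetaSeq_of_not_clearWindow (mt (clearWindow_thetaSumSeq_iff hM hcM).1 hb)

end Composition

def thetaSum (n m L : ℕ) (a : ℕ → ZMod 2) : (Fin n → ZMod 2) → Fin n → ZMod 2 :=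
  theta n m 0 + ∑ k ∈ Icc 1 L, a k • theta n m k

section Theta

variable {n m k L : ℕ}

lemma idx_idx (i : Fin n) (p q : ℕ) : idx (idx i p) q = idx i (p + q) := by
  ext
  simp [idx, Nat.add_assoc]

lemma idx_zero (i : Fin n) : idx i 0 = i := by
  ext
  simp [idx, Nat.mod_eq_of_lt i.isLt]

lemma idx_add_self (i : Fin n) (p : ℕ) : idx i (p + n) = idx i p := by
  ext
  simp [idx, ← Nat.add_assoc]

lemma theta_zero : theta n m 0 = id := by
  simp [theta]

lemma theta_apply_idx (x : Fin n → ZMod 2) (i : Fin n) (p : ℕ) :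
    theta n m k x (idx i p) = thetaSeq m (m * k) (fun j => x (idx i j)) p := by
  unfold theta thetaSeq
  split_ifs with hk
  · simp [hk]
  · simp only [idx_idx]

lemma theta_apply (x : Fin n → ZMod 2) (i : Fin n) :
    theta n m k x i = thetaSeq m (m * k) (fun j => x (idx i j)) 0 := by
  rw [← theta_apply_idx, idx_zero]

lemma thetaSum_apply (a : ℕ → ZMod 2) (x : Fin n → ZMod 2) (i : Fin n) :
    thetaSum n m L a x i = x i + ∑ k ∈ Icc 1 L, a k * theta n m k x i := by
  simp [thetaSum, theta_zero, Finset.sum_apply]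

lemma theta_thetaSum_apply (a : ℕ → ZMod 2) (x : Fin n → ZMod 2) (i : Fin n) :
    theta n m k (thetaSum n m L a x) i =
      theta n m k x i + ∑ r ∈ Icc 1 L, a r * theta n m (k + r) x i := by
  have hseq : (fun j => thetaSum n m L a x (idx i j)) =
      thetaSumSeq m L a (fun j => x (idx i j)) := by
    funext p
    simp only [thetaSum_apply, theta_apply_idx, thetaSumSeq]
  simp only [theta_apply, mul_add, hseq]
  exact thetaSeq_thetaSumSeq (dvd_mul_right m k)

lemma thetaSum_thetaSum_apply (a : ℕ → ZMod 2) (x : Fin n → ZMod 2) (i : Fin n) :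
    thetaSum n m L a (thetaSum n m L a x) i =
      x i + ∑ k ∈ Icc 1 L, a k * theta n m (2 * k) x i := by
  simp only [thetaSum_apply, theta_thetaSum_apply, mul_add, sum_add_distrib, mul_sum]
  rw [add_assoc, ← add_assoc (∑ k ∈ Icc 1 L, _), CharTwo.add_self_eq_zero, zero_add,
    sum_sum_eq_sum_diag_of_symm _ _ fun k r => by rw [add_comm k r, mul_left_comm]]
  simp only [← mul_assoc, ← sq, ZMod.pow_card, two_mul]

/-- Since `m ∤ n`, the window of `θ_{m,k}` reaches the position `mk - n`, which is
the same coordinate as `mk`. -/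
lemma theta_eq_zero_of_lt (hmn : ¬ m ∣ n) (h : n < m * k) : theta n m k = 0 := by
  funext x i
  have := i.pos
  rw [theta_apply, Pi.zero_apply, Pi.zero_apply]
  by_cases hw : ClearWindow m (fun j => x (idx i j)) 0 (m * k)
  · have hmj : ¬ m ∣ m * k - n := fun h' =>
      hmn ((Nat.dvd_add_left h').1 (by rw [Nat.add_sub_cancel' h.le]; exact dvd_mul_right m k))
    have := hw (m * k - n) (by simp only [mem_Ico]; omega) hmj
    rw [thetaSeq_of_clearWindow hw, zero_add, ← Nat.sub_add_cancel h.le, idx_add_self]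
    simpa using this
  · exact thetaSeq_of_not_clearWindow hw

lemma thetaSum_thetaSum_apply_of_not_dvd (hmn : ¬ m ∣ n) (a : ℕ → ZMod 2)
    (x : Fin n → ZMod 2) (i : Fin n) :
    thetaSum n m (n / m) a (thetaSum n m (n / m) a x) i =
      x i + ∑ k ∈ Icc 1 (n / m / 2), a k * theta n m (2 * k) x i := by
  rw [thetaSum_thetaSum_apply]
  congr 1
  refine (sum_subset (Icc_subset_Icc_right (Nat.div_le_self _ _)) fun k hk hk' => ?_).symm
  simp only [mem_Icc, not_and, not_le] at hk hk'
  have hm : 0 < m := Nat.pos_of_ne_zero fun h => by simp [h] at hk; omega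
  have := Nat.lt_mul_div_succ n hm
  have := Nat.mul_le_mul_left m (show n / m + 1 ≤ 2 * k by omega)
  rw [theta_eq_zero_of_lt hmn (by omega), Pi.zero_apply, Pi.zero_apply, mul_zero]

lemma mul_lt_of_le_div_of_not_dvd {j : ℕ} (hmn : ¬ m ∣ n) (h : j ≤ n / m) : m * j < n :=
  (Nat.mul_le_mul_left m h).trans_lt <|
    (Nat.mul_div_le n m).lt_of_ne fun h' => hmn ⟨n / m, h'.symm⟩

lemma theta_single_apply_zero (hk : m * k < n) (t : Fin n) (ht : m ∣ (t : ℕ)) :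
    theta n m k (Pi.single t 1) ⟨0, by omega⟩ = if m * k = t then 1 else 0 := by
  have hidx {j : ℕ} (hj : j < n) : idx (⟨0, by omega⟩ : Fin n) j = ⟨j, hj⟩ := by
    ext
    simp [idx, Nat.mod_eq_of_lt hj]
  have hw : ClearWindow m (fun j => Pi.single (M := fun _ => ZMod 2) t 1 (idx ⟨0, by omega⟩ j))
      0 (m * k) := by
    intro j hj hmj
    simp only [mem_Ico] at hj
    dsimp only
    rw [zero_add, hidx (by omega), Pi.single_apply, if_neg]
    intro hjt
    exact hmj (by rw [← hjt] at ht; exact ht)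
  rw [theta_apply, thetaSeq_of_clearWindow hw, zero_add, hidx hk]
  simp only [Pi.single_apply, Fin.ext_iff]

end Theta

theorem stmt10_general (n m : ℕ) (hmn : ¬ m ∣ n)
    (a : ℕ → ZMod 2) :
    ((theta n m 0 + ∑ i ∈ Finset.Icc 1 (n / m), a i • theta n m i) ∘
        (theta n m 0 + ∑ i ∈ Finset.Icc 1 (n / m), a i • theta n m i) = id) ↔
      ∀ i : ℕ, 1 ≤ i → i ≤ n / m / 2 → a i = 0 := by
  change thetaSum n m (n / m) a ∘ thetaSum n m (n / m) a = id ↔ _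
  simp only [funext_iff, Function.comp_apply, id_eq, thetaSum_thetaSum_apply_of_not_dvd hmn,
    add_eq_left]
  constructor
  · intro h k hk hk2
    have hm : 0 < m := Nat.pos_of_ne_zero fun h => by simp [h] at hk2; omega
    have hlt (k' : ℕ) (hk' : k' ≤ n / m / 2) : m * (2 * k') < n :=
      mul_lt_of_le_div_of_not_dvd hmn (by omega)
    have hsingle := h (Pi.single ⟨m * (2 * k), hlt k hk2⟩ 1) ⟨0, by have := hlt k hk2; omega⟩
    rw [sum_congr rfl fun k' hk' => by
      rw [theta_single_apply_zero (hlt k' (mem_Icc.1 hk').2) _ (dvd_mul_right m _)]] at hsingle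
    simpa [hm.ne', hk, hk2] using hsingle
  · intro h x i
    exact sum_eq_zero fun k hk => by rw [h k (mem_Icc.1 hk).1 (mem_Icc.1 hk).2, zero_mul]

theorem stmt10 (n m : ℕ) (hn : 1 ≤ n) (hm : 2 ≤ m) (hmn : ¬ m ∣ n)
    (a : ℕ → ZMod 2) :
    ((theta n m 0 + ∑ i ∈ Finset.Icc 1 (n / m), a i • theta n m i) ∘
        (theta n m 0 + ∑ i ∈ Finset.Icc 1 (n / m), a i • theta n m i) = id) ↔
      ∀ i : ℕ, 1 ≤ i → i ≤ n / m / 2 → a i = 0 :=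
  stmt10_general n m hmn a
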